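/- For n > 2, a tree T on n+1 vertices satisfies σ⁻(T) = ⌈n/2⌉ if and only if T is the star K_{1,n}. -/

import Mathlib

open SimpleGraph

variable {V : Type*}

/-- The set of "negative" edges of `G` under the parity labeling induced by
the bijection `f : V ≃ Fin (Fintype.card V)`: edges whose endpoint labels
have opposite parity. -/
def negSet [Fintype V] (G : SimpleGraph V) (f : V ≃ Fin (Fintype.card V)) : Set (Sym2 V) :=
  {e ∈ G.edgeSet |
    Sym2.lift ⟨fun u v => ((f u : ℕ) % 2 ≠ (f v : ℕ) % 2), fun u v => propext ne_comm⟩ e}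

/-- The number of negative edges under the labeling `f`. -/
noncomputable def negCount [Fintype V] (G : SimpleGraph V) (f : V ≃ Fin (Fintype.card V)) : ℕ :=
  (negSet G f).ncard

/-- The rna number of `G`: the minimum number of negative edges over all parity labelings. -/
noncomputable def rna [Fintype V] (G : SimpleGraph V) : ℕ :=
  sInf (Set.range (negCount G))

/-- `C(G)`: minimum of `||S₁| − |S₂||` over partitions of the vertex set into two
nonempty parts each inducing a connected subgraph. -/
noncomputable def Cval [Fintype V] (G : SimpleGraph V) : ℕ :=
  sInf {d | ∃ S : Set V, S.Nonempty ∧ Sᶜ.Nonempty ∧ (G.induce S).Connected ∧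
    (G.induce Sᶜ).Connected ∧ d = ((S.ncard : ℤ) - (Sᶜ.ncard : ℤ)).natAbs}

/-- `G` is a star: some center `c` is adjacent exactly to all other vertices,
with no other edges. -/
def IsStar (G : SimpleGraph V) : Prop :=
  ∃ c : V, ∀ a b : V, G.Adj a b ↔ (a ≠ b ∧ (a = c ∨ b = c))


/-- count of evens below m -/
lemma card_filter_even_range (m : ℕ) :
    ((Finset.range m).filter (fun i => i % 2 = 0)).card = (m + 1) / 2 := by
  induction m with
  | zero => simp
  | succ m ih =>
    rw [Finset.range_add_one, Finset.filter_insert]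
    rcases Nat.mod_two_eq_zero_or_one m with h | h
    · rw [if_pos h, Finset.card_insert_of_notMem (by simp)]
      omega
    · rw [if_neg (by omega)]
      omega

lemma card_filter_odd_range (m : ℕ) :
    ((Finset.range m).filter (fun i => i % 2 = 1)).card = m / 2 := by
  induction m with
  | zero => simp
  | succ m ih =>
    rw [Finset.range_add_one, Finset.filter_insert]
    rcases Nat.mod_two_eq_zero_or_one m with h | h
    · rw [if_neg (by omega)]
      omega
    · rw [if_pos h, Finset.card_insert_of_notMem (by simp)]
      omega

lemma ncard_fin_parity (m r : ℕ) :
    {i : Fin m | (i : ℕ) % 2 = r}.ncard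
      = ((Finset.range m).filter (fun i => i % 2 = r)).card := by
  classical
  rw [Set.ncard_eq_toFinset_card', Set.toFinset_setOf]
  rw [Finset.card_filter, Finset.card_filter]
  exact Fin.sum_univ_eq_sum_range (fun i => if i % 2 = r then 1 else 0) m

lemma ncard_fin_even (m : ℕ) : {i : Fin m | (i : ℕ) % 2 = 0}.ncard = (m + 1) / 2 := by
  rw [ncard_fin_parity, card_filter_even_range]

lemma ncard_fin_odd (m : ℕ) : {i : Fin m | (i : ℕ) % 2 = 1}.ncard = m / 2 := by
  rw [ncard_fin_parity, card_filter_odd_range]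

/-- construct a parity labeling putting `S` on the even labels -/
lemma exists_parity_equiv [Fintype V] (S : Set V)
    (h : S.ncard = (Fintype.card V + 1) / 2) :
    ∃ f : V ≃ Fin (Fintype.card V), ∀ v, v ∈ S ↔ (f v : ℕ) % 2 = 0 := by
  classical
  set m := Fintype.card V with hm
  set E : Set (Fin m) := {i | (i : ℕ) % 2 = 0} with hE
  have hSn : S.ncard = Fintype.card S := by
    rw [← Nat.card_coe_set_eq, Nat.card_eq_fintype_card]
  have hEn : E.ncard = Fintype.card E := by
    rw [← Nat.card_coe_set_eq, Nat.card_eq_fintype_card]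
  have hcards : Fintype.card S = Fintype.card E := by
    rw [← hSn, ← hEn, h, hE, ncard_fin_even]
  have hcardsc : Fintype.card ↥Sᶜ = Fintype.card ↥Eᶜ := by
    rw [Fintype.card_compl_set, Fintype.card_compl_set, hcards, Fintype.card_fin]
  let e₁ : S ≃ E := Fintype.equivOfCardEq hcards
  let e₂ : ↥Sᶜ ≃ ↥Eᶜ := Fintype.equivOfCardEq hcardsc
  refine ⟨(Equiv.Set.sumCompl S).symm.trans ((e₁.sumCongr e₂).trans (Equiv.Set.sumCompl E)), ?_⟩
  intro v
  by_cases hv : v ∈ S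
  · simp only [Equiv.trans_apply, Equiv.Set.sumCompl_symm_apply_of_mem hv, Equiv.sumCongr_apply,
      Sum.map_inl, Equiv.Set.sumCompl_apply_inl]
    exact iff_of_true hv (e₁ ⟨v, hv⟩).2
  · simp only [Equiv.trans_apply, Equiv.Set.sumCompl_symm_apply_of_notMem hv, Equiv.sumCongr_apply,
      Sum.map_inr, Equiv.Set.sumCompl_apply_inr]
    exact iff_of_false hv (e₂ ⟨v, hv⟩).2

lemma induce_singleton_connected (G : SimpleGraph V) (a : V) :
    (G.induce {a}).Connected := by
  rw [induce_singleton_eq_top]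
  haveI : Nonempty ({a} : Set V) := ⟨⟨a, rfl⟩⟩
  exact Connected.mk (fun x y => (Subsingleton.elim x y) ▸ Reachable.refl x)

lemma induce_mono_graph {G H : SimpleGraph V} (h : G ≤ H) (S : Set V) :
    G.induce S ≤ H.induce S := by
  intro x y hxy
  exact h hxy

lemma exists_connected_subset [Fintype V] (H : SimpleGraph V) (A : Set V)
    (hA : (H.induce A).Connected) :
    ∀ j, 1 ≤ j → j ≤ A.ncard →
      ∃ S : Set V, S ⊆ A ∧ S.ncard = j ∧ (H.induce S).Connected := by
  classical
  intro j
  induction j with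
  | zero => omega
  | succ j ih =>
    intro h1 hle
    by_cases hj : j = 0
    · subst hj
      have hApos : 0 < A.ncard := by omega
      obtain ⟨a, ha⟩ := (Set.ncard_pos (Set.toFinite A)).mp hApos
      exact ⟨{a}, by simpa using ha, Set.ncard_singleton a,
        induce_singleton_connected H a⟩
    · obtain ⟨S, hSA, hScard, hScon⟩ := ih (by omega) (by omega)
      have hne : ¬ A ⊆ S := by
        intro hsub
        have := Set.ncard_le_ncard hsub (Set.toFinite S)
        omega
      obtain ⟨t, htA, htS⟩ := Set.not_subset.mp hne
      have hSne : S.Nonempty := (Set.ncard_pos (Set.toFinite S)).mp (by omega)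
      obtain ⟨s0, hs0⟩ := hSne
      obtain ⟨p⟩ := hA.preconnected ⟨s0, hSA hs0⟩ ⟨t, htA⟩
      obtain ⟨d, _, hdfst, hdsnd⟩ :=
        p.exists_boundary_dart (Subtype.val ⁻¹' S) hs0 htS
      have hadj : H.Adj (d.fst : V) (d.snd : V) := d.adj
      have hw : (d.snd : V) ∉ S := hdsnd
      have hcon : (H.induce (({(d.snd : V), (d.fst : V)} : Set V) ∪ S)).Connected :=
        induce_union_connected (induce_pair_connected_of_adj hadj.symm).preconnected hScon.preconnected
          ⟨(d.fst : V), by simp [hdfst], hdfst⟩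
      have hset : (({(d.snd : V), (d.fst : V)} : Set V) ∪ S) = insert (d.snd : V) S := by
        ext z
        simp only [Set.mem_union, Set.mem_insert_iff, Set.mem_singleton_iff]
        constructor
        · rintro ((rfl | rfl) | hz)
          · exact Or.inl rfl
          · exact Or.inr hdfst
          · exact Or.inr hz
        · rintro (rfl | hz)
          · exact Or.inl (Or.inl rfl)
          · exact Or.inr hz
      refine ⟨insert (d.snd : V) S, ?_, ?_, ?_⟩
      · exact Set.insert_subset d.snd.2 hSA
      · rw [Set.ncard_insert_of_notMem hw (Set.toFinite S)]; omega
      · rw [← hset]; exact hcon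

lemma connectedComponent_supp_induce_connected (H : SimpleGraph V) (u : V) :
    (H.induce (H.connectedComponentMk u).supp).Connected := by
  classical
  haveI : Nonempty ((H.connectedComponentMk u).supp : Set V) :=
    ⟨⟨u, by simp [ConnectedComponent.mem_supp_iff]⟩⟩
  refine Connected.mk (fun x y => ?_)
  obtain ⟨x, hx⟩ := x
  obtain ⟨y, hy⟩ := y
  rw [ConnectedComponent.mem_supp_iff, ConnectedComponent.eq] at hx hy
  obtain ⟨p⟩ := hx.trans hy.symm
  have hsupp : {v | v ∈ p.support} ⊆ (H.connectedComponentMk u).supp := by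
    intro z hz
    rw [ConnectedComponent.mem_supp_iff, ConnectedComponent.eq]
    have hxz : H.Reachable x z := ⟨p.takeUntil z hz⟩
    exact hxz.symm.trans hx
  have hc := p.connected_induce_support
  have hr := hc.preconnected ⟨x, p.start_mem_support⟩ ⟨y, p.end_mem_support⟩
  exact hr.map (H.induceHomOfLE hsupp).toHom

lemma reachable_delete_cover (H : SimpleGraph V) (u v : V) :
    ∀ {x w : V}, H.Walk x w →
      ((H.deleteEdges {s(u,v)}).Reachable u x ∨ (H.deleteEdges {s(u,v)}).Reachable v x) →
      ((H.deleteEdges {s(u,v)}).Reachable u w ∨ (H.deleteEdges {s(u,v)}).Reachable v w) := by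
  intro x w p
  induction p with
  | nil => exact id
  | @cons a c d h q ih =>
    intro hx
    apply ih
    by_cases he : s(a, c) = s(u, v)
    · rw [Sym2.eq_iff] at he
      rcases he with ⟨rfl, rfl⟩ | ⟨rfl, rfl⟩
      · exact Or.inr (Reachable.refl _)
      · exact Or.inl (Reachable.refl _)
    · have hadj : (H.deleteEdges {s(u,v)}).Adj a c := by
        rw [deleteEdges_adj]
        exact ⟨h, by simpa using he⟩
      rcases hx with h1 | h1
      · exact Or.inl (h1.trans hadj.reachable)
      · exact Or.inr (h1.trans hadj.reachable)

lemma tree_bridge {G : SimpleGraph V} (hT : G.IsTree) {u v : V} (huv : G.Adj u v) :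
    ¬ (G.deleteEdges {s(u,v)}).Reachable u v := by
  have hb := (isAcyclic_iff_forall_adj_isBridge.mp hT.2) huv
  rw [isBridge_iff] at hb
  exact hb

lemma exists_good_subset [Fintype V] (G : SimpleGraph V) (hT : G.IsTree)
    {u v b : V} (huv : G.Adj u v) (hvb : G.Adj v b) (hbu : b ≠ u) (k : ℕ) (hk1 : 1 ≤ k)
    (hk : k ≤ ((G.deleteEdges {s(u,v)}).connectedComponentMk u).supp.ncard) :
    ∃ S : Set V, S.ncard = k ∧ (G.induce S).Connected ∧ v ∉ S ∧ b ∉ S := by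
  classical
  set H := G.deleteEdges {s(u,v)} with hH
  set A := (H.connectedComponentMk u).supp with hA
  have hbr : ¬ H.Reachable u v := tree_bridge hT huv
  have hAcon := connectedComponent_supp_induce_connected H u
  obtain ⟨S, hSA, hcard, hcon⟩ := exists_connected_subset H A hAcon k hk1 hk
  have hGcon : (G.induce S).Connected :=
    hcon.mono (induce_mono_graph (deleteEdges_le _) S)
  have hmemA : ∀ w, w ∈ A ↔ H.Reachable w u := by
    intro w
    rw [hA, ConnectedComponent.mem_supp_iff, ConnectedComponent.eq]
  refine ⟨S, hcard, hGcon, ?_, ?_⟩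
  · intro hv
    exact hbr ((hmemA v).mp (hSA hv)).symm
  · intro hbS
    have hrbu : H.Reachable b u := (hmemA b).mp (hSA hbS)
    have hadjvb : H.Adj v b := by
      rw [hH, deleteEdges_adj]
      refine ⟨hvb, ?_⟩
      simp only [Set.mem_singleton_iff, Sym2.eq_iff]
      push_neg
      constructor
      · intro h; exact absurd h huv.ne'
      · intro _; exact hbu
    exact hbr (hrbu.symm.trans hadjvb.symm.reachable)
lemma negCount_bound [Fintype V] (G : SimpleGraph V) (hT : G.IsTree)
    (S : Set V) (hScon : (G.induce S).Connected)
    {x y : V} (hxy : G.Adj x y) (hx : x ∉ S) (hy : y ∉ S)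
    (f : V ≃ Fin (Fintype.card V)) (hf : ∀ w, w ∈ S ↔ (f w : ℕ) % 2 = 0) :
    negCount G f + S.ncard ≤ Fintype.card V - 1 := by
  classical
  haveI : Fintype ↥G.edgeSet := Fintype.ofFinite _
  haveI : Fintype ↥(G.induce S).edgeSet := Fintype.ofFinite _
  set E := G.edgeFinset with hEdef
  set E₁ := ((G.induce S).edgeFinset).image (Sym2.map (Subtype.val : S → V)) with hE₁def
  have hE : E.card + 1 = Fintype.card V := hT.card_edgeFinset
  -- induce S is a tree
  have hStree : (G.induce S).IsTree := by
    refine ⟨hScon, fun w c hc => ?_⟩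
    exact hT.2 (c.map (SimpleGraph.Embedding.induce S).toHom)
      (hc.map (SimpleGraph.Embedding.induce (G := G) S).injective)
  have hSn : S.ncard = Fintype.card S := by
    rw [← Nat.card_coe_set_eq, Nat.card_eq_fintype_card]
  have hE₁card : E₁.card + 1 = S.ncard := by
    rw [hE₁def, Finset.card_image_of_injective _ (Sym2.map.injective Subtype.val_injective),
      hSn]
    exact hStree.card_edgeFinset
  -- all endpoints of E₁ edges lie in S
  have hmemE₁ : ∀ e ∈ E₁, ∀ z ∈ e, z ∈ S := by
    intro e he z hz
    rw [hE₁def, Finset.mem_image] at he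
    obtain ⟨e', he', rfl⟩ := he
    induction e' using Sym2.ind with
    | _ p q =>
      rw [Sym2.map_pair_eq, Sym2.mem_iff] at hz
      rcases hz with rfl | rfl
      · exact p.2
      · exact q.2
  have hE₁sub : E₁ ⊆ E := by
    intro e he
    rw [hE₁def, Finset.mem_image] at he
    obtain ⟨e', he', rfl⟩ := he
    induction e' using Sym2.ind with
    | _ p q =>
      rw [mem_edgeFinset] at he' ⊢
      rw [Sym2.map_pair_eq]
      exact he'
  have hxyE : s(x, y) ∈ E := by rw [mem_edgeFinset]; exact hxy
  have hxynotE₁ : s(x, y) ∉ E₁ := by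
    intro h
    exact hx (hmemE₁ _ h x (Sym2.mem_mk_left x y))
  have hsub : E₁ ∪ {s(x,y)} ⊆ E := by
    intro e he
    rcases Finset.mem_union.mp he with h | h
    · exact hE₁sub h
    · rw [Finset.mem_singleton] at h; subst h; exact hxyE
  have hdisj : negSet G f ⊆ ↑(E \ (E₁ ∪ {s(x,y)})) := by
    intro e he
    induction e using Sym2.ind with
    | _ a c =>
      obtain ⟨hedge, hpar⟩ := he
      rw [Sym2.lift_mk] at hpar
      simp only [Finset.coe_sdiff, Set.mem_diff, Finset.coe_union, Set.mem_union,
        Finset.mem_coe, Finset.coe_singleton, Set.mem_singleton_iff]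
      refine ⟨by rw [mem_edgeFinset]; exact hedge, ?_⟩
      rintro (h | h)
      · have ha : a ∈ S := hmemE₁ _ h a (Sym2.mem_mk_left a c)
        have hc : c ∈ S := hmemE₁ _ h c (Sym2.mem_mk_right a c)
        rw [hf a] at ha
        rw [hf c] at hc
        exact hpar (ha.trans hc.symm)
      · rw [Sym2.eq_iff] at h
        have hpnot : ∀ z, z ∉ S → (f z : ℕ) % 2 = 1 := by
          intro z hz
          have h0 : ¬ ((f z : ℕ) % 2 = 0) := fun hh => hz ((hf z).mpr hh)
          omega
        rcases h with ⟨rfl, rfl⟩ | ⟨rfl, rfl⟩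
        · exact hpar ((hpnot _ hx).trans (hpnot _ hy).symm)
        · exact hpar ((hpnot _ hy).trans (hpnot _ hx).symm)
  have hcount : negCount G f ≤ (E \ (E₁ ∪ {s(x,y)})).card := by
    have h1 := Set.ncard_le_ncard hdisj (Finset.finite_toSet _)
    rwa [Set.ncard_coe_finset] at h1
  have hdj : Disjoint E₁ ({s(x,y)} : Finset (Sym2 V)) := by
    rw [Finset.disjoint_singleton_right]; exact hxynotE₁
  have hunion : (E₁ ∪ {s(x,y)}).card = E₁.card + 1 := by
    rw [Finset.card_union_of_disjoint hdj, Finset.card_singleton]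
  have hcard_sdiff : (E \ (E₁ ∪ {s(x,y)})).card = E.card - (E₁.card + 1) := by
    rw [Finset.card_sdiff_of_subset hsub, hunion]
  have hle : E₁.card + 1 ≤ E.card := by
    have := Finset.card_le_card hsub
    omega
  have hSpos : 1 ≤ S.ncard :=
    (Set.ncard_pos (Set.toFinite S)).mpr (Set.nonempty_coe_sort.mp hScon.nonempty)
  omega

lemma walk_stay {G : SimpleGraph V} {u : V}
    (hleaf : ∀ x, G.Adj u x → ∀ z, G.Adj x z → z = u) :
    ∀ {x w : V}, G.Walk x w → (x = u ∨ G.Adj u x) → (w = u ∨ G.Adj u w) := by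
  intro x w p
  induction p with
  | nil => exact id
  | @cons a c d h q ih =>
    intro hx
    apply ih
    rcases hx with rfl | hx
    · exact Or.inr h
    · exact Or.inl (hleaf _ hx _ h)

lemma star_of {G : SimpleGraph V} (hcon : G.Connected) {u a v : V} (hav : a ≠ v)
    (hua : G.Adj u a) (huv : G.Adj u v)
    (hsplit : ∀ x y, G.Adj x y → (∀ c, G.Adj x c → c = y) ∨ (∀ c, G.Adj y c → c = x)) :
    IsStar G := by
  have hleaf : ∀ x, G.Adj u x → ∀ z, G.Adj x z → z = u := by
    intro x hx z hz
    rcases hsplit u x hx with h | h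
    · exact absurd ((h a hua).trans (h v huv).symm) hav
    · exact h z hz
  have hall : ∀ w, w = u ∨ G.Adj u w := by
    intro w
    obtain ⟨p⟩ := hcon.preconnected u w
    exact walk_stay hleaf p (Or.inl rfl)
  refine ⟨u, fun p q => ?_⟩
  constructor
  · intro h
    refine ⟨h.ne, ?_⟩
    rcases hall p with rfl | hp
    · exact Or.inl rfl
    · exact Or.inr (hleaf p hp q h)
  · rintro ⟨hne, rfl | rfl⟩
    · rcases hall q with rfl | h
      · exact absurd rfl hne
      · exact h
    · rcases hall p with rfl | h
      · exact absurd rfl hne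
      · exact h.symm

lemma exists_internal [Fintype V] (G : SimpleGraph V) (hT : G.IsTree)
    (h4 : 4 ≤ Fintype.card V) (hns : ¬ IsStar G) :
    ∃ u v a b, G.Adj u v ∧ G.Adj u a ∧ a ≠ v ∧ G.Adj v b ∧ b ≠ u := by
  classical
  by_contra hcon
  push_neg at hcon
  have hsplit : ∀ x y, G.Adj x y → (∀ c, G.Adj x c → c = y) ∨ (∀ c, G.Adj y c → c = x) := by
    intro x y hxy
    by_cases h : ∃ a, G.Adj x a ∧ a ≠ y
    · obtain ⟨a, ha, hay⟩ := h
      exact Or.inr (fun c hc => hcon x y a c hxy ha hay hc)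
    · push_neg at h
      exact Or.inl h
  obtain ⟨w₁, w₂, hww⟩ := Fintype.exists_pair_of_one_lt_card (show 1 < Fintype.card V by omega)
  obtain ⟨p⟩ := hT.1.preconnected w₁ w₂
  have hedge : ∃ x y, G.Adj x y := by
    cases p with
    | nil => exact absurd rfl hww
    | cons h q => exact ⟨_, _, h⟩
  obtain ⟨x, y, hxy⟩ := hedge
  by_cases hx : ∃ a, G.Adj x a ∧ a ≠ y
  · obtain ⟨a, ha, hay⟩ := hx
    exact hns (star_of hT.1 hay ha hxy hsplit)
  by_cases hy : ∃ b, G.Adj y b ∧ b ≠ x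
  · obtain ⟨b, hb, hbx⟩ := hy
    exact hns (star_of hT.1 hbx hb hxy.symm hsplit)
  push_neg at hx hy
  -- both endpoints are leaves: everything is in {x, y}
  have hleaf : ∀ z, G.Adj x z → ∀ w, G.Adj z w → w = x := by
    intro z hz w hw
    have hzy : z = y := hx z hz
    subst hzy
    exact hy w hw
  have hstay : ∀ w, w = x ∨ w = y := by
    intro w
    obtain ⟨p⟩ := hT.1.preconnected x w
    rcases walk_stay hleaf p (Or.inl rfl) with h | h
    · exact Or.inl h
    · exact Or.inr (hx w h)
  have hcard : Fintype.card V ≤ 2 := by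
    have hsub : (Finset.univ : Finset V) ⊆ {x, y} := by
      intro w _
      rcases hstay w with rfl | rfl <;> simp
    calc Fintype.card V = (Finset.univ : Finset V).card := rfl
      _ ≤ ({x, y} : Finset V).card := Finset.card_le_card hsub
      _ ≤ 2 := Finset.card_insert_le x {y} |>.trans (by simp)
  omega
lemma negCount_star [Fintype V] {G : SimpleGraph V} {c : V}
    (hstar : ∀ a b : V, G.Adj a b ↔ (a ≠ b ∧ (a = c ∨ b = c)))
    (f : V ≃ Fin (Fintype.card V)) :
    negCount G f = {i : Fin (Fintype.card V) | (i : ℕ) % 2 ≠ (f c : ℕ) % 2}.ncard := by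
  classical
  have himg : negSet G f = (fun x => s(c, x)) '' {x | (f x : ℕ) % 2 ≠ (f c : ℕ) % 2} := by
    ext e
    constructor
    · intro he
      induction e using Sym2.ind with
      | _ a b =>
        obtain ⟨hedge, hpar⟩ := he
        rw [Sym2.lift_mk] at hpar
        rw [mem_edgeSet, hstar] at hedge
        obtain ⟨hne, hc | hc⟩ := hedge
        · subst hc
          exact ⟨b, fun h => hpar h.symm, rfl⟩
        · subst hc
          exact ⟨a, hpar, Sym2.eq_swap⟩
    · rintro ⟨z, hz, rfl⟩
      have hzc : z ≠ c := fun h => hz (by rw [h])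
      refine ⟨(mem_edgeSet G).mpr ((hstar c z).mpr ⟨hzc.symm, Or.inl rfl⟩), ?_⟩
      rw [Sym2.lift_mk]
      exact fun h => hz h.symm
  have hinj : Function.Injective (fun x : V => s(c, x)) := fun p q h =>
    Sym2.congr_right.mp h
  rw [negCount, himg, Set.ncard_image_of_injective _ hinj]
  have hpre : {x : V | (f x : ℕ) % 2 ≠ (f c : ℕ) % 2}
      = f ⁻¹' {i | (i : ℕ) % 2 ≠ (f c : ℕ) % 2} := rfl
  rw [hpre, ← Equiv.image_symm_eq_preimage, Set.ncard_image_of_injective _ f.symm.injective]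

lemma rna_star [Fintype V] {G : SimpleGraph V} (hns : IsStar G) :
    rna G = Fintype.card V / 2 := by
  classical
  obtain ⟨c, hstar⟩ := hns
  haveI : Nonempty V := ⟨c⟩
  have hpos : 0 < Fintype.card V := Fintype.card_pos
  apply le_antisymm
  · set e := Fintype.equivFin V with he
    set f := e.trans (Equiv.swap (e c) ⟨0, hpos⟩) with hfdef
    have hfc : (f c : ℕ) = 0 := by
      rw [hfdef]
      simp [Equiv.swap_apply_left]
    refine le_trans (Nat.sInf_le ⟨f, rfl⟩) ?_
    rw [negCount_star hstar f, hfc]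
    have hset : {i : Fin (Fintype.card V) | (i : ℕ) % 2 ≠ 0 % 2}
        = {i : Fin (Fintype.card V) | (i : ℕ) % 2 = 1} := by
      ext i
      simp only [Set.mem_setOf_eq]
      omega
    rw [hset, ncard_fin_odd]
  · haveI : Nonempty (V ≃ Fin (Fintype.card V)) := ⟨Fintype.equivFin V⟩
    refine le_csInf (Set.range_nonempty _) ?_
    rintro m ⟨f, rfl⟩
    rw [negCount_star hstar f]
    rcases Nat.mod_two_eq_zero_or_one (f c : ℕ) with h | h
    · have hset : {i : Fin (Fintype.card V) | (i : ℕ) % 2 ≠ (f c : ℕ) % 2}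
          = {i : Fin (Fintype.card V) | (i : ℕ) % 2 = 1} := by
        ext i
        simp only [Set.mem_setOf_eq, h]
        omega
      rw [hset, ncard_fin_odd]
    · have hset : {i : Fin (Fintype.card V) | (i : ℕ) % 2 ≠ (f c : ℕ) % 2}
          = {i : Fin (Fintype.card V) | (i : ℕ) % 2 = 0} := by
        ext i
        simp only [Set.mem_setOf_eq, h]
        omega
      rw [hset, ncard_fin_even]
      omega

lemma rna_lt_of_not_star [Fintype V] (G : SimpleGraph V) (n : ℕ) (hn : 2 < n)
    (hcard : Fintype.card V = n + 1) (hT : G.IsTree) (hns : ¬ IsStar G) :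
    rna G < (n + 1) / 2 := by
  classical
  set k := (Fintype.card V + 1) / 2 with hk
  obtain ⟨u, v, a, b, huv, hua, hav, hvb, hbu⟩ := exists_internal G hT (by omega) hns
  set H := G.deleteEdges {s(u,v)} with hH
  set A := (H.connectedComponentMk u).supp with hA
  have hcover : ∀ w, w ∉ A → w ∈ (H.connectedComponentMk v).supp := by
    intro w hw
    obtain ⟨p⟩ := hT.1.preconnected u w
    rcases reachable_delete_cover G u v p (Or.inl (Reachable.refl u)) with h | h
    · refine absurd ?_ hw
      rw [hA, ConnectedComponent.mem_supp_iff, ConnectedComponent.eq]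
      exact h.symm
    · rw [ConnectedComponent.mem_supp_iff, ConnectedComponent.eq]
      exact h.symm
  have hk1 : 1 ≤ k := by omega
  have htot : A.ncard + Aᶜ.ncard = Fintype.card V := by
    rw [Set.ncard_add_ncard_compl A, Nat.card_eq_fintype_card]
  have hmain : ∃ S : Set V, S.ncard = k ∧ (G.induce S).Connected ∧
      ∃ x y, G.Adj x y ∧ x ∉ S ∧ y ∉ S := by
    by_cases hbig : k ≤ A.ncard
    · obtain ⟨S, hS1, hS2, hS3, hS4⟩ := exists_good_subset G hT huv hvb hbu k hk1 hbig
      exact ⟨S, hS1, hS2, v, b, hvb, hS3, hS4⟩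
    · have h2 : k ≤ Aᶜ.ncard := by omega
      have hsubB : Aᶜ ⊆ (H.connectedComponentMk v).supp := fun w hw => hcover w hw
      have h3 : k ≤ ((H.connectedComponentMk v).supp).ncard :=
        le_trans h2 (Set.ncard_le_ncard hsubB (Set.toFinite _))
      have h3' : k ≤ (((G.deleteEdges {s(v,u)}).connectedComponentMk v).supp).ncard := by
        rw [Sym2.eq_swap (a := v) (b := u)]
        exact h3
      obtain ⟨S, hS1, hS2, hS3, hS4⟩ := exists_good_subset G hT huv.symm hua hav k hk1 h3'
      exact ⟨S, hS1, hS2, u, a, hua, hS3, hS4⟩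
  obtain ⟨S, hScard, hScon, x, y, hxy, hx, hy⟩ := hmain
  obtain ⟨f, hf⟩ := exists_parity_equiv S (by rw [hScard, hk])
  have hbound := negCount_bound G hT S hScon hxy hx hy f hf
  have hrna : rna G ≤ negCount G f := Nat.sInf_le ⟨f, rfl⟩
  omega

/-- For n > 2, a tree on n+1 vertices has σ⁻(T) = ⌈n/2⌉ iff it is the star K_{1,n}. -/
theorem rna_eq_half_iff_star {V : Type*} [Fintype V] (G : SimpleGraph V) (n : ℕ) (hn : 2 < n)
    (hcard : Fintype.card V = n + 1) (hT : G.IsTree) :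
    rna G = (n + 1) / 2 ↔ IsStar G := by
  constructor
  · intro h
    by_contra hns
    have := rna_lt_of_not_star G n hn hcard hT hns
    omega
  · intro hstar
    rw [rna_star hstar, hcard]
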